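/- arXiv:1603.09092 — 5 statements merged into one kernel-verified Lean document; each statement's English description precedes it below -/
import Mathlib

section
/- For every t≥0 and every y∈ℝ: ∫_{−∞}^{∞} | P_x(U_t>y) − P̂_x(Y_t>y) | dx ≤ |δ|·t. -/
open MeasureTheory Set Filter
open scoped ENNReal NNReal Topology

noncomputable section

namespace RefractedLevy

/-- Parameters of the jump diffusion (2.1)–(2.3): Brownian part `sigma`, drift `mu`,
jump intensities `lamPlus`, `lamMinus`, and the (possibly complex) parameters of the
rational jump densities. -/
structure JumpParams where
  sigma : ℝ
  mu : ℝ
  lamPlus : ℝ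
  lamMinus : ℝ
  mPlus : ℕ
  nMinus : ℕ
  mOrd : Fin mPlus → ℕ
  nOrd : Fin nMinus → ℕ
  eta : Fin mPlus → ℂ
  theta : Fin nMinus → ℂ
  c : (k : Fin mPlus) → Fin (mOrd k) → ℂ
  d : (k : Fin nMinus) → Fin (nOrd k) → ℂ
  sigma_pos : 0 < sigma
  lamPlus_pos : 0 < lamPlus
  lamMinus_pos : 0 < lamMinus
  eta_inj : Function.Injective eta
  theta_inj : Function.Injective theta

/-- The density `p⁺` of the positive jumps, formula (2.2) (index `j` runs over `1,…,m_k`,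
encoded as `j.1 + 1`). -/
def JumpParams.pPlus (p : JumpParams) (z : ℝ) : ℂ :=
  ∑ k, ∑ j, p.c k j * (p.eta k) ^ ((j : ℕ) + 1) * (z : ℂ) ^ (j : ℕ) /
      ((Nat.factorial (j : ℕ) : ℂ)) * Complex.exp (-(p.eta k) * z)

/-- The density `p⁻` of (the absolute value of) the negative jumps, formula (2.3). -/
def JumpParams.pMinus (p : JumpParams) (z : ℝ) : ℂ :=
  ∑ k, ∑ j, p.d k j * (p.theta k) ^ ((j : ℕ) + 1) * (z : ℂ) ^ (j : ℕ) /
      ((Nat.factorial (j : ℕ) : ℂ)) * Complex.exp (-(p.theta k) * z)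

/-- `p⁺` and `p⁻` are genuine probability densities on `(0,∞)`. -/
structure JumpParams.IsDensity (p : JumpParams) : Prop where
  pPlus_real : ∀ z : ℝ, 0 < z → (p.pPlus z).im = 0
  pPlus_nonneg : ∀ z : ℝ, 0 < z → 0 ≤ (p.pPlus z).re
  pPlus_int : ∫ z in Ioi (0:ℝ), (p.pPlus z).re = 1
  pMinus_real : ∀ z : ℝ, 0 < z → (p.pMinus z).im = 0
  pMinus_nonneg : ∀ z : ℝ, 0 < z → 0 ≤ (p.pMinus z).re
  pMinus_int : ∫ z in Ioi (0:ℝ), (p.pMinus z).re = 1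

/-- The characteristic exponent ψ of (2.5), as a function of a complex variable. -/
def JumpParams.psi (p : JumpParams) (z : ℂ) : ℂ :=
  -(p.sigma ^ 2 / 2 : ℝ) * z ^ 2 + Complex.I * z * (p.mu : ℝ)
    + (p.lamPlus : ℝ) *
        ((∑ k, ∑ j, p.c k j * (p.eta k / (p.eta k - Complex.I * z)) ^ ((j : ℕ) + 1)) - 1)
    + (p.lamMinus : ℝ) *
        ((∑ k, ∑ j, p.d k j * (p.theta k / (p.theta k + Complex.I * z)) ^ ((j : ℕ) + 1)) - 1)

/-- ψ̂(z) = ψ(z) − iδz, the characteristic exponent of `Y_t = X_t − δ t`. -/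
def JumpParams.psiHat (p : JumpParams) (δ : ℝ) (z : ℂ) : ℂ :=
  p.psi z - Complex.I * (δ : ℝ) * z

/-- `z` is not a pole of ψ. -/
def JumpParams.Regular (p : JumpParams) (z : ℂ) : Prop :=
  (∀ k, p.eta k - Complex.I * z ≠ 0) ∧ (∀ k, p.theta k + Complex.I * z ≠ 0)

/-- `q ∈ 𝕊`: all (non-pole) roots of `ψ(z) = q` and of `ψ̂(z) = q` are simple. -/
def JumpParams.SimpleRoots (p : JumpParams) (δ q : ℝ) : Prop :=
  (∀ z : ℂ, p.Regular z → p.psi z = q → deriv p.psi z ≠ 0) ∧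
  (∀ z : ℂ, p.Regular z → p.psiHat δ z = q → deriv (p.psiHat δ) z ≠ 0)

variable {Ω : Type*} [MeasurableSpace Ω]

/-- `(P x)_{x ∈ ℝ}` is the family of laws of a càdlàg process `X` with stationary
independent increments, started at `x` under `P x`, with characteristic exponent `p.psi`. -/
structure IsLevyFamily (P : ℝ → Measure Ω) (X : ℝ → Ω → ℝ) (p : JumpParams) : Prop where
  prob : ∀ x, IsProbabilityMeasure (P x)
  meas : ∀ t, Measurable (X t)
  start : ∀ x, (P x) {ω | X 0 ω = x} = 1
  cadlag : ∀ x, ∀ᵐ ω ∂(P x),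
      (∀ t : ℝ, 0 ≤ t → ContinuousWithinAt (fun s => X s ω) (Ici t) t) ∧
      (∀ t : ℝ, 0 < t → ∃ l : ℝ, Tendsto (fun s => X s ω) (𝓝[<] t) (𝓝 l))
  stationary : ∀ (x s t : ℝ), 0 ≤ s → 0 ≤ t →
      Measure.map (fun ω => X (s + t) ω - X s ω) (P x)
        = Measure.map (fun ω => X t ω - X 0 ω) (P 0)
  indep : ∀ (x : ℝ) (n : ℕ) (ts : Fin (n + 1) → ℝ), (∀ i, 0 ≤ ts i) → Monotone ts →
      ProbabilityTheory.iIndepFun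
        (fun (i : Fin n) ω => X (ts i.succ) ω - X (ts i.castSucc) ω) (P x)
  charExp : ∀ z : ℝ,
      ∫ ω, Complex.exp (Complex.I * (z : ℂ) * (X 1 ω : ℂ)) ∂(P 0) = Complex.exp (p.psi z)

/-- `U` solves the refraction equation (1.1) along the sample path `ω`. -/
def RefractionEq (X U : ℝ → Ω → ℝ) (δ b : ℝ) (ω : Ω) : Prop :=
  ∀ t : ℝ, 0 ≤ t →
    U t ω = X t ω - δ * ∫ s in Ioc (0:ℝ) t, (if b < U s ω then (1:ℝ) else 0)

/-- `U` is the (strong) solution of the refraction equation driven by `X`. -/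
structure IsRefracted (P : ℝ → Measure Ω) (X U : ℝ → Ω → ℝ) (δ b : ℝ) : Prop where
  meas : ∀ t, Measurable (U t)
  sol : ∀ x, ∀ᵐ ω ∂(P x), RefractionEq X U δ b ω

/-- the drifted process `Y_t = X_t − δ t`. -/
def drifted (X : ℝ → Ω → ℝ) (δ : ℝ) (t : ℝ) (ω : Ω) : ℝ := X t ω - δ * t

/-- running supremum `Z̄_t = sup_{0 ≤ s ≤ t} Z_s`. -/
def runSup (Z : ℝ → Ω → ℝ) (t : ℝ) (ω : Ω) : ℝ := sSup ((fun s => Z s ω) '' Icc 0 t)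

/-- running infimum `Z̲_t = inf_{0 ≤ s ≤ t} Z_s`. -/
def runInf (Z : ℝ → Ω → ℝ) (t : ℝ) (ω : Ω) : ℝ := sInf ((fun s => Z s ω) '' Icc 0 t)

/-- `P(Z_{e(q)} > y) = ∫₀^∞ q e^{−qt} P(Z_t > y) dt`. -/
def probGt (q : ℝ) (P : Measure Ω) (Z : ℝ → Ω → ℝ) (y : ℝ) : ℝ :=
  ∫ t in Ioi (0:ℝ), q * Real.exp (-q * t) * ((P {ω | y < Z t ω}).toReal)

/-- `P(Z_{e(q)} < y)`. -/
def probLt (q : ℝ) (P : Measure Ω) (Z : ℝ → Ω → ℝ) (y : ℝ) : ℝ :=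
  ∫ t in Ioi (0:ℝ), q * Real.exp (-q * t) * ((P {ω | Z t ω < y}).toReal)

/-- `P(Z_{e(q)} ≤ y)`. -/
def probLe (q : ℝ) (P : Measure Ω) (Z : ℝ → Ω → ℝ) (y : ℝ) : ℝ :=
  ∫ t in Ioi (0:ℝ), q * Real.exp (-q * t) * ((P {ω | Z t ω ≤ y}).toReal)

/-- `E[e^{s Z_{e(q)}}]` for real `s`. -/
def lapMix (q : ℝ) (P : Measure Ω) (Z : ℝ → Ω → ℝ) (s : ℝ) : ℝ :=
  ∫ t in Ioi (0:ℝ), q * Real.exp (-q * t) * ∫ ω, Real.exp (s * Z t ω) ∂P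

/-- `E[e^{φ Z_{e(q)}}]` for complex `φ`. -/
def lapMixC (q : ℝ) (P : Measure Ω) (Z : ℝ → Ω → ℝ) (φ : ℂ) : ℂ :=
  ∫ t in Ioi (0:ℝ), ((q * Real.exp (-q * t) : ℝ) : ℂ) * ∫ ω, Complex.exp (φ * (Z t ω : ℂ)) ∂P

/-- the law of `Z_{e(q)}` under `P`: the `Exp(q)`-mixture of the laws of `Z_t`. -/
def expLaw (q : ℝ) (P : Measure Ω) (Z : ℝ → Ω → ℝ) : Measure ℝ :=
  (((volume : Measure ℝ).restrict (Ioi 0)).withDensity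
      fun t => ENNReal.ofReal (q * Real.exp (-q * t))).bind fun t => Measure.map (Z t) P

/-- the convolution of two laws on ℝ. -/
def convLaw (μ ν : Measure ℝ) : Measure ℝ :=
  Measure.map (fun z : ℝ × ℝ => z.1 + z.2) (μ.prod ν)

/-- the measure whose distribution function is `K_q`: the convolution of the law of
`Y̲_{e(q)}` under `P̂` with the law of `X̄_{e(q)}` under `P` (both started at 0). -/
def Kmeas (q : ℝ) (P : Measure Ω) (X : ℝ → Ω → ℝ) (δ : ℝ) : Measure ℝ :=
  convLaw (expLaw q P (runInf (drifted X δ))) (expLaw q P (runSup X))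

/-- the distribution function `K_q`. -/
def Kq (q : ℝ) (P : Measure Ω) (X : ℝ → Ω → ℝ) (δ : ℝ) (x : ℝ) : ℝ :=
  (Kmeas q P X δ (Iic x)).toReal

/-- `F₁` is the continuous, continuously differentiable, bounded function on `(0,∞)`
with Laplace transform (2.10). -/
def IsF1 (q : ℝ) (P : Measure Ω) (X : ℝ → Ω → ℝ) (δ : ℝ) (F : ℝ → ℝ) : Prop :=
  ContinuousOn F (Ioi 0) ∧ (∀ x ∈ Ioi (0:ℝ), DifferentiableAt ℝ F x) ∧
    ContinuousOn (deriv F) (Ioi 0) ∧ (∃ C, ∀ x ∈ Ioi (0:ℝ), |F x| ≤ C) ∧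
    ∀ s : ℝ, 0 < s →
      ∫ x in Ioi (0:ℝ), Real.exp (-s * x) * F x
        = (1 / s) * (lapMix q P (runSup (drifted X δ)) (-s) / lapMix q P (runSup X) (-s) - 1)

/-- `F₂` is the continuous, continuously differentiable function on `(−∞,0)`
with Laplace transform (4.9). -/
def IsF2 (q : ℝ) (P : Measure Ω) (X : ℝ → Ω → ℝ) (δ : ℝ) (F : ℝ → ℝ) : Prop :=
  ContinuousOn F (Iio 0) ∧ (∀ x ∈ Iio (0:ℝ), DifferentiableAt ℝ F x) ∧
    ContinuousOn (deriv F) (Iio 0) ∧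
    ∀ s : ℝ, 0 < s →
      ∫ z in Iio (0:ℝ), Real.exp (s * z) * F z
        = (1 / s) * (lapMix q P (runInf X) s / lapMix q P (runInf (drifted X δ)) s - 1)

/-! Along every path, `U_t − Y_t = δ · Leb{s ∈ (0, t] : U_s ≤ b}` lies between `0` and `δ t`, so
the events `{U_t > y}` and `{Y_t > y}` can only differ when `Y_t` falls in the window of length
`|δ| t` between `y − δ t` and `y`. Integrated over the starting point `x`, the probability that the
spatially homogeneous process `Y` lands in a fixed window is the window's Lebesgue measure. -/

end RefractedLevy

open scoped symmDiff

theorem mem_uIoc_sub_of_xor_lt {u v y c : ℝ} (huv : u - v ∈ uIcc 0 c)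
    (h : Xor (y < u) (y < v)) : v ∈ uIoc (y - c) y := by
  rw [mem_uIcc] at huv
  rw [mem_uIoc]
  rcases h with ⟨hu, hv⟩ | ⟨hv, hu⟩ <;> rcases huv with ⟨h0, hc⟩ | ⟨hc, h0⟩
  · exact Or.inl ⟨by linarith, by linarith⟩
  · exact Or.inr ⟨by linarith, by linarith⟩
  · exact Or.inl ⟨by linarith, by linarith⟩
  · exact Or.inr ⟨by linarith, by linarith⟩

theorem setIntegral_Ioc_mem_Icc_of_mem_Icc {f : ℝ → ℝ} {t : ℝ} (ht : 0 ≤ t)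
    (hf : ∀ s, f s ∈ Icc (0 : ℝ) 1) : ∫ s in Ioc 0 t, f s ∈ Icc 0 t := by
  refine ⟨integral_nonneg fun s => (hf s).1, ?_⟩
  have hnorm : ‖∫ s in Ioc 0 t, f s‖ ≤ 1 * volume.real (Ioc 0 t) :=
    norm_setIntegral_le_of_norm_le_const measure_Ioc_lt_top fun s _ => by
      rw [Real.norm_of_nonneg (hf s).1]; exact (hf s).2
  rw [Real.volume_real_Ioc_of_le ht, sub_zero, one_mul] at hnorm
  exact (le_abs_self _).trans hnorm

theorem lintegral_measure_preimage_const_add {G : Type*} [MeasurableSpace G] [AddGroup G]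
    [MeasurableAdd₂ G] (μ : Measure G) [μ.IsAddRightInvariant] [SFinite μ]
    (ν : Measure G) [SFinite ν] {s : Set G} (hs : MeasurableSet s) :
    ∫⁻ x, ν ((x + ·) ⁻¹' s) ∂μ = ν univ * μ s := by
  have hmeas : Measurable fun z : G × G => s.indicator (1 : G → ℝ≥0∞) (z.1 + z.2) :=
    (measurable_const.indicator hs).comp measurable_add
  calc ∫⁻ x, ν ((x + ·) ⁻¹' s) ∂μ
      = ∫⁻ x, ∫⁻ w, s.indicator 1 (x + w) ∂ν ∂μ := by
        refine lintegral_congr fun x => ?_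
        rw [← lintegral_indicator_one (measurable_const_add x hs)]
        rfl
    _ = ∫⁻ w, ∫⁻ x, s.indicator 1 (x + w) ∂μ ∂ν := lintegral_lintegral_swap hmeas.aemeasurable
    _ = ∫⁻ _, μ s ∂ν := by
        refine lintegral_congr fun w => ?_
        rw [lintegral_add_right_eq_self (s.indicator 1) w, lintegral_indicator_one hs]
    _ = ν univ * μ s := by rw [lintegral_const, mul_comm]

theorem lintegral_measure_preimage_of_increment {Ω : Type*} [MeasurableSpace Ω]
    {P : ℝ → Measure Ω} {Z Z₀ : Ω → ℝ} {ν : Measure ℝ} [IsProbabilityMeasure ν]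
    (hZ : Measurable Z) (hZ₀ : Measurable Z₀) (hstart : ∀ x, ∀ᵐ ω ∂P x, Z₀ ω = x)
    (hlaw : ∀ x, (P x).map (fun ω => Z ω - Z₀ ω) = ν) {s : Set ℝ} (hs : MeasurableSet s) :
    ∫⁻ x, P x (Z ⁻¹' s) = volume s := by
  have hshift : ∀ x, P x (Z ⁻¹' s) = ν ((x + ·) ⁻¹' s) := by
    intro x
    rw [← hlaw x, Measure.map_apply (by fun_prop) (measurable_const_add x hs)]
    refine measure_congr ?_
    filter_upwards [hstart x] with ω hω
    change (Z ω ∈ s) = (x + (Z ω - Z₀ ω) ∈ s)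
    rw [hω, add_sub_cancel]
  simp_rw [hshift]
  rw [lintegral_measure_preimage_const_add _ _ hs, measure_univ, one_mul]

namespace RefractedLevy

variable {Ω : Type*}

theorem RefractionEq.sub_drifted_mem_uIcc {X U : ℝ → Ω → ℝ} {δ b : ℝ} {ω : Ω}
    (hω : RefractionEq X U δ b ω) {t : ℝ} (ht : 0 ≤ t) :
    U t ω - drifted X δ t ω ∈ uIcc 0 (δ * t) := by
  set I := ∫ s in Ioc (0:ℝ) t, (if b < U s ω then (1:ℝ) else 0)
  have hI : I ∈ Icc 0 t := setIntegral_Ioc_mem_Icc_of_mem_Icc ht fun s => by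
    split_ifs <;> simp
  have hlag : U t ω - drifted X δ t ω = δ * (t - I) := by
    rw [hω t ht, drifted]; ring
  have hscaled := mem_image_of_mem (δ * ·)
    (Icc_subset_uIcc (⟨sub_nonneg.2 hI.2, sub_le_self t hI.1⟩ : t - I ∈ Icc 0 t))
  rwa [image_const_mul_uIcc, mul_zero, ← hlag] at hscaled

variable [MeasurableSpace Ω]

theorem IsLevyFamily.lintegral_measure_preimage {P : ℝ → Measure Ω} {X : ℝ → Ω → ℝ}
    {p : JumpParams} (hX : IsLevyFamily P X p) {t : ℝ} (ht : 0 ≤ t) {s : Set ℝ}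
    (hs : MeasurableSet s) : ∫⁻ x, P x (X t ⁻¹' s) = volume s := by
  have := hX.prob 0
  have := Measure.isProbabilityMeasure_map (μ := P 0) ((hX.meas t).sub (hX.meas 0)).aemeasurable
  refine lintegral_measure_preimage_of_increment (hX.meas t) (hX.meas 0) (fun x => ?_)
    (fun x => by simpa using hX.stationary x 0 t le_rfl ht) hs
  have := hX.prob x
  exact (ae_iff_measure_eq (hX.meas 0 (measurableSet_singleton x)).nullMeasurableSet).2
    (by rw [measure_univ]; exact hX.start x)

theorem IsLevyFamily.lintegral_measure_drifted_preimage {P : ℝ → Measure Ω}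
    {X : ℝ → Ω → ℝ} {p : JumpParams} (hX : IsLevyFamily P X p) (δ : ℝ) {t : ℝ} (ht : 0 ≤ t)
    {s : Set ℝ} (hs : MeasurableSet s) :
    ∫⁻ x, P x (drifted X δ t ⁻¹' s) = volume s := by
  change ∫⁻ x, P x (X t ⁻¹' ((· + -(δ * t)) ⁻¹' s)) = _
  rw [hX.lintegral_measure_preimage ht (measurable_add_const _ hs), measure_preimage_add_right]

theorem IsRefracted.ofReal_abs_sub_le_measure_drifted_mem_uIoc {P : ℝ → Measure Ω}
    {X U : ℝ → Ω → ℝ} {p : JumpParams} {δ b : ℝ} (hX : IsLevyFamily P X p)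
    (hU : IsRefracted P X U δ b) {t : ℝ} (ht : 0 ≤ t) (x y : ℝ) :
    ENNReal.ofReal |(P x).real {ω | y < U t ω} - (P x).real {ω | y < drifted X δ t ω}|
      ≤ P x (drifted X δ t ⁻¹' uIoc (y - δ * t) y) := by
  have := hX.prob x
  calc _ ≤ ENNReal.ofReal ((P x).real ({ω | y < U t ω} ∆ {ω | y < drifted X δ t ω})) :=
        ENNReal.ofReal_le_ofReal <| abs_measureReal_sub_le_measureReal_symmDiff
          (measurableSet_lt measurable_const (hU.meas t)).nullMeasurableSet
          (measurableSet_lt measurable_const ((hX.meas t).sub_const _)).nullMeasurableSet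
    _ = P x ({ω | y < U t ω} ∆ {ω | y < drifted X δ t ω}) := ofReal_measureReal
    _ ≤ P x (drifted X δ t ⁻¹' uIoc (y - δ * t) y) := by
        refine measure_mono_ae ?_
        filter_upwards [hU.sol x] with ω hω hxor
        exact mem_uIoc_sub_of_xor_lt (hω.sub_drifted_mem_uIcc ht) hxor

theorem statement_7_general
    {Ω : Type*} [MeasurableSpace Ω] (P : ℝ → Measure Ω) (X U : ℝ → Ω → ℝ)
    (p : JumpParams) (δ b : ℝ)
    (hX : IsLevyFamily P X p)
    (hU : IsRefracted P X U δ b)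
    (t : ℝ) (ht : 0 ≤ t) (y : ℝ) :
    ∫⁻ x : ℝ, ENNReal.ofReal
        |((P x) {ω | y < U t ω}).toReal - ((P x) {ω | y < drifted X δ t ω}).toReal|
      ≤ ENNReal.ofReal (|δ| * t) :=
  calc _ ≤ ∫⁻ x, P x (drifted X δ t ⁻¹' uIoc (y - δ * t) y) :=
        lintegral_mono fun x => hU.ofReal_abs_sub_le_measure_drifted_mem_uIoc hX ht x y
    _ = ENNReal.ofReal (|δ| * t) := by
        rw [hX.lintegral_measure_drifted_preimage δ ht measurableSet_uIoc, Real.volume_uIoc,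
          sub_sub_cancel, abs_mul, abs_of_nonneg ht]

/-- Lemma 3.1, (3.10): for every `t ≥ 0` and `y ∈ ℝ`,
`∫ |P_x(U_t > y) − P̂_x(Y_t > y)| dx ≤ |δ| t`. -/
theorem statement_7
    {Ω : Type*} [MeasurableSpace Ω] (P : ℝ → Measure Ω) (X U : ℝ → Ω → ℝ)
    (p : JumpParams) (δ b : ℝ)
    (hX : IsLevyFamily P X p) (hp : p.IsDensity)
    (hU : IsRefracted P X U δ b)
    (t : ℝ) (ht : 0 ≤ t) (y : ℝ) :
    ∫⁻ x : ℝ, ENNReal.ofReal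
        |((P x) {ω | y < U t ω}).toReal - ((P x) {ω | y < drifted X δ t ω}).toReal|
      ≤ ENNReal.ofReal (|δ| * t) :=
  statement_7_general P X U p δ b hX hU t ht y

end RefractedLevy
end
end

section
/- For every t≥0 and every y∈ℝ: ∫_{−∞}^{∞} | P_x(X̄_t>y) − P̂_x(Ȳ_t>y) | dx ≤ |δ|·t, where X̄_t=sup_{0≤s≤t}X_s and Ȳ_t=sup_{0≤s≤t}Y_s. -/
open MeasureTheory Set Filter
open scoped ENNReal NNReal Topology

noncomputable section

namespace RefractedLevy

variable {Ω : Type*} [MeasurableSpace Ω]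

/-!
Since `Y_t = X_t − δ t`, the running suprema satisfy `X̄_t − δ⁺ t ≤ Ȳ_t ≤ X̄_t + δ⁻ t` pathwise,
so the events `{X̄_t > y}` and `{Ȳ_t > y}` differ only where `X̄_t ∈ (y − δ⁻ t, y + δ⁺ t]`, an
interval of length `|δ| t`. By right-continuity `X̄_t` is a supremum over rational times, hence a
measurable functional of the increments `X_s − X_0`; their law does not depend on the starting
point (independent stationary increments determine all finite-dimensional laws), so the law of
`X̄_t` under `P_x` is that under `P_0` translated by `x`. By Fubini,
`∫ P_0(X̄_t ∈ (u − x, v − x]) dx = v − u`.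
-/

lemma bddAbove_image_of_le_add {ι : Type*} {S : Set ι} {f g : ι → ℝ} {c : ℝ}
    (hg : BddAbove (g '' S)) (hfg : ∀ s ∈ S, f s ≤ g s + c) : BddAbove (f '' S) := by
  obtain ⟨M, hM⟩ := hg
  exact ⟨M + c, forall_mem_image.2 fun s hs =>
    (hfg s hs).trans (add_le_add_left (hM (mem_image_of_mem g hs)) c)⟩

lemma csSup_image_le_csSup_image_add {ι : Type*} {S : Set ι} {f g : ι → ℝ} {c : ℝ}
    (hS : S.Nonempty) (hg : BddAbove (g '' S)) (hfg : ∀ s ∈ S, f s ≤ g s + c) :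
    sSup (f '' S) ≤ sSup (g '' S) + c :=
  csSup_le (hS.image f) <| forall_mem_image.2 fun s hs =>
    (hfg s hs).trans (add_le_add_left (le_csSup hg (mem_image_of_mem g hs)) c)

lemma sSup_image_mem_Icc_of_forall_mem_Icc {ι : Type*} {S : Set ι} {f g : ι → ℝ} {a b : ℝ}
    (hS : S.Nonempty) (ha : 0 ≤ a) (hb : 0 ≤ b)
    (hfg : ∀ s ∈ S, g s ∈ Icc (f s - a) (f s + b)) :
    sSup (g '' S) ∈ Icc (sSup (f '' S) - a) (sSup (f '' S) + b) := by
  have hgf : ∀ s ∈ S, g s ≤ f s + b := fun s hs => (hfg s hs).2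
  have hfg' : ∀ s ∈ S, f s ≤ g s + a := fun s hs => by linarith [(hfg s hs).1]
  by_cases hf : BddAbove (f '' S)
  · have hg : BddAbove (g '' S) := bddAbove_image_of_le_add hf hgf
    exact ⟨by linarith [csSup_image_le_csSup_image_add hS hg hfg'],
      csSup_image_le_csSup_image_add hS hf hgf⟩
  · have hg : ¬ BddAbove (g '' S) := fun hg => hf (bddAbove_image_of_le_add hg hfg')
    rw [Real.sSup_of_not_bddAbove hf, Real.sSup_of_not_bddAbove hg]
    exact ⟨by linarith, by linarith⟩

lemma runSup_drifted_mem_Icc {α : Type*} (X : ℝ → α → ℝ) (δ : ℝ) {t : ℝ} (ht : 0 ≤ t) (ω : α) :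
    runSup (drifted X δ) t ω ∈
      Icc (runSup X t ω - max δ 0 * t) (runSup X t ω + max (-δ) 0 * t) := by
  refine sSup_image_mem_Icc_of_forall_mem_Icc ⟨0, le_rfl, ht⟩
    (mul_nonneg (le_max_right _ _) ht) (mul_nonneg (le_max_right _ _) ht) fun s hs => ?_
  have h₁ : δ * s ≤ max δ 0 * t := mul_le_mul (le_max_left _ _) hs.2 hs.1 (le_max_right _ _)
  have h₂ : -δ * s ≤ max (-δ) 0 * t := mul_le_mul (le_max_left _ _) hs.2 hs.1 (le_max_right _ _)
  exact ⟨by simp only [drifted]; linarith, by simp only [drifted]; linarith⟩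

lemma bddAbove_image_Icc_of_cadlag {f : ℝ → ℝ} {t : ℝ}
    (hR : ∀ s, 0 ≤ s → ContinuousWithinAt f (Ici s) s)
    (hL : ∀ s, 0 < s → ∃ l, Tendsto f (𝓝[<] s) (𝓝 l)) :
    BddAbove (f '' Icc 0 t) := by
  refine isCompact_Icc.induction_on (p := fun U => BddAbove (f '' U)) (by simp)
    (fun U V hUV hV => hV.mono (image_mono hUV))
    (fun U V hU hV => by simpa only [image_union] using hU.union hV) fun s hs => ?_
  have hright : ∀ᶠ r in 𝓝[≥] s, f r < f s + 1 :=
    (hR s hs.1).eventually_lt_const (lt_add_one _)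
  obtain ⟨C, hC⟩ : ∃ C, ∀ᶠ r in 𝓝[Icc 0 t] s, f r < C := by
    rcases hs.1.eq_or_lt with rfl | hpos
    · exact ⟨f 0 + 1, nhdsWithin_mono _ Icc_subset_Ici_self hright⟩
    · obtain ⟨l, hl⟩ := hL s hpos
      have hleft : ∀ᶠ r in 𝓝[<] s, f r < l + 1 := hl.eventually_lt_const (lt_add_one _)
      refine ⟨max (l + 1) (f s + 1), nhdsWithin_le_nhds ?_⟩
      rw [← nhdsLT_sup_nhdsGE]
      exact ⟨hleft.mono fun r hr => hr.trans_le (le_max_left _ _),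
        hright.mono fun r hr => hr.trans_le (le_max_right _ _)⟩
  exact ⟨_, hC, C, forall_mem_image.2 fun r hr => le_of_lt hr⟩

/-- `projIcc` clamps the rationals `≥ t` to `t`, so the right endpoint is among the sampled
times. -/
lemma sSup_image_Icc_eq_iSup_rat {f : ℝ → ℝ} {t : ℝ} (ht : 0 ≤ t)
    (hR : ∀ s, 0 ≤ s → ContinuousWithinAt f (Ici s) s) (hbdd : BddAbove (f '' Icc 0 t)) :
    sSup (f '' Icc 0 t) = ⨆ q : ℚ, f (projIcc 0 t ht q) := by
  have hbdd' : BddAbove (range fun q : ℚ => f (projIcc 0 t ht q)) :=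
    hbdd.mono (range_subset_iff.2 fun q => mem_image_of_mem f (projIcc 0 t ht q).2)
  refine le_antisymm (csSup_le ((nonempty_Icc.2 ht).image f) ?_)
    (ciSup_le fun q => le_csSup hbdd (mem_image_of_mem f (projIcc 0 t ht q).2))
  refine forall_mem_image.2 fun s hs => le_of_not_gt fun hlt => ?_
  obtain ⟨b, hb, hsub⟩ :=
    mem_nhdsGE_iff_exists_Ico_subset.1 ((hR s hs.1).eventually_const_lt hlt)
  obtain ⟨q, hsq, hqb⟩ := exists_rat_btwn (mem_Ioi.1 hb)
  have hq : (projIcc 0 t ht q : ℝ) ∈ Ico s b := by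
    rw [coe_projIcc]
    exact ⟨le_max_of_le_right (le_min hs.2 hsq.le),
      max_lt (hs.1.trans_lt (hsq.trans hqb)) ((min_le_right _ _).trans_lt hqb)⟩
  exact (hsub hq).not_ge (le_ciSup hbdd' q)

lemma measurable_partialSum {n : ℕ} :
    Measurable (Fin.partialSum : (Fin n → ℝ) → Fin (n + 1) → ℝ) := by
  refine measurable_pi_lambda _ fun i => ?_
  induction i using Fin.inductionOn with
  | zero => simp only [Fin.partialSum_zero]; exact measurable_const
  | succ i ih => simp only [Fin.partialSum_succ]; exact ih.add (measurable_pi_apply i)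

lemma lintegral_measure_Ioc_sub_sub (ν : Measure ℝ) [SFinite ν] (a b : ℝ) :
    ∫⁻ x, ν (Ioc (a - x) (b - x)) = ENNReal.ofReal (b - a) * ν univ := by
  have hT : MeasurableSet {z : ℝ × ℝ | z.1 + z.2 ∈ Ioc a b} :=
    measurableSet_Ioc.preimage (measurable_fst.add measurable_snd)
  calc ∫⁻ x, ν (Ioc (a - x) (b - x))
      = (volume.prod ν) {z : ℝ × ℝ | z.1 + z.2 ∈ Ioc a b} := by
        rw [Measure.prod_apply hT]
        exact lintegral_congr fun x => by rw [← preimage_const_add_Ioc]; rfl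
    _ = ∫⁻ z, volume (Ioc (a - z) (b - z)) ∂ν := by
        rw [Measure.prod_apply_symm hT]
        exact lintegral_congr fun z => by rw [← preimage_add_const_Ioc]; rfl
    _ = ENNReal.ofReal (b - a) * ν univ := by
        simp only [Real.volume_Ioc, sub_sub_sub_cancel_right, lintegral_const]

lemma ofReal_abs_measureReal_sub_le {α : Type*} [MeasurableSpace α] (μ : Measure α)
    [IsFiniteMeasure μ] {A B E : Set α} (hA : A ⊆ B ∪ E) (hB : B ⊆ A ∪ E) :
    ENNReal.ofReal |μ.real A - μ.real B| ≤ μ E := by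
  rw [ENNReal.ofReal_le_iff_le_toReal (measure_ne_top _ _), abs_sub_le_iff]
  change _ ≤ μ.real E ∧ _ ≤ μ.real E
  constructor
  · linarith [measureReal_mono (μ := μ) hA, measureReal_union_le (μ := μ) B E]
  · linarith [measureReal_mono (μ := μ) hB, measureReal_union_le (μ := μ) A E]

variable {P : ℝ → Measure Ω} {X : ℝ → Ω → ℝ} {p : JumpParams}

lemma IsLevyFamily.ae_start (hX : IsLevyFamily P X p) (x : ℝ) : ∀ᵐ ω ∂P x, X 0 ω = x := by
  have := hX.prob x
  have hmeas : MeasurableSet {ω | X 0 ω = x} := hX.meas 0 (measurableSet_singleton x)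
  rw [ae_iff_measure_eq hmeas.nullMeasurableSet, hX.start x, measure_univ]

lemma IsLevyFamily.map_increments (hX : IsLevyFamily P X p) (x : ℝ) {n : ℕ}
    {ts : Fin (n + 1) → ℝ} (hts : ∀ i, 0 ≤ ts i) (hmono : Monotone ts) :
    (P x).map (fun ω i => X (ts i.succ) ω - X (ts i.castSucc) ω) =
      Measure.pi fun i : Fin n =>
        (P 0).map fun ω => X (ts i.succ - ts i.castSucc) ω - X 0 ω := by
  have := hX.prob x
  rw [(hX.indep x n ts hts hmono).map_fun_eq_pi_map
    (f := fun (i : Fin n) ω => X (ts i.succ) ω - X (ts i.castSucc) ω)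
    fun i => ((hX.meas _).sub (hX.meas _)).aemeasurable]
  congr 1
  funext i
  have h := hX.stationary x (ts i.castSucc) (ts i.succ - ts i.castSucc) (hts _)
    (sub_nonneg.2 (hmono (Fin.castSucc_le_succ i)))
  rwa [add_sub_cancel] at h

lemma IsLevyFamily.map_sub_start_of_monotone (hX : IsLevyFamily P X p) (x : ℝ) {n : ℕ}
    {ts : Fin (n + 1) → ℝ} (hts : ∀ i, 0 ≤ ts i) (hmono : Monotone ts)
    (hts₀ : ts 0 = 0) :
    (P x).map (fun ω i => X (ts i) ω - X 0 ω) = (P 0).map (fun ω i => X (ts i) ω - X 0 ω) := by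
  have hincr : Measurable fun ω (i : Fin n) => X (ts i.succ) ω - X (ts i.castSucc) ω :=
    measurable_pi_lambda _ fun i => (hX.meas _).sub (hX.meas _)
  have htelescope : (fun ω i => X (ts i) ω - X 0 ω) =
      Fin.partialSum ∘ fun ω (i : Fin n) => X (ts i.succ) ω - X (ts i.castSucc) ω := by
    funext ω i
    induction i using Fin.inductionOn with
    | zero => simp [hts₀]
    | succ i ih =>
      simp only [Function.comp_apply] at ih ⊢
      rw [Fin.partialSum_succ, ← ih]
      ring
  rw [htelescope, ← Measure.map_map measurable_partialSum hincr,
    ← Measure.map_map measurable_partialSum hincr, hX.map_increments x hts hmono,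
    hX.map_increments 0 hts hmono]

lemma IsLevyFamily.map_sub_start_of_fintype (hX : IsLevyFamily P X p) (x : ℝ) {ι : Type*}
    [Fintype ι] {s : ι → ℝ} (hs : ∀ i, 0 ≤ s i) :
    (P x).map (fun ω i => X (s i) ω - X 0 ω) = (P 0).map (fun ω i => X (s i) ω - X 0 ω) := by
  classical
  set T : Finset ℝ := insert 0 (Finset.image s Finset.univ)
  have hT : ∀ a ∈ T, 0 ≤ a := by simpa [T] using hs
  obtain ⟨n, hn⟩ : ∃ n, T.card = n + 1 :=
    ⟨_, (Nat.succ_pred_eq_of_pos (Finset.card_pos.2 ⟨0, Finset.mem_insert_self _ _⟩)).symm⟩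
  set ts := T.orderEmbOfFin hn
  have hts₀ : ts 0 = 0 := by
    rw [show (0 : Fin (n + 1)) = ⟨0, n.succ_pos⟩ from rfl, Finset.orderEmbOfFin_zero]
    exact le_antisymm (Finset.min'_le _ _ (Finset.mem_insert_self _ _)) (Finset.le_min' _ _ _ hT)
  have hidx : ∀ i, s i ∈ range ts := fun i => by
    rw [Finset.range_orderEmbOfFin]
    exact Finset.mem_insert_of_mem (Finset.mem_image_of_mem s (Finset.mem_univ i))
  choose k hk using hidx
  have hsel : (fun ω i => X (s i) ω - X 0 ω) =
      (fun w i => w (k i)) ∘ fun ω (j : Fin (n + 1)) => X (ts j) ω - X 0 ω := by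
    funext ω i
    simp [hk]
  have hmeas : Measurable fun ω (j : Fin (n + 1)) => X (ts j) ω - X 0 ω :=
    measurable_pi_lambda _ fun j => (hX.meas _).sub (hX.meas _)
  have hsel_meas : Measurable fun (w : Fin (n + 1) → ℝ) i => w (k i) :=
    measurable_pi_lambda _ fun i => measurable_pi_apply _
  rw [hsel, ← Measure.map_map hsel_meas hmeas, ← Measure.map_map hsel_meas hmeas,
    hX.map_sub_start_of_monotone x (fun j => hT _ (T.orderEmbOfFin_mem hn j)) ts.monotone hts₀]

lemma IsLevyFamily.map_sub_start (hX : IsLevyFamily P X p) (x : ℝ) {ι : Type*}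
    {s : ι → ℝ} (hs : ∀ i, 0 ≤ s i) :
    (P x).map (fun ω i => X (s i) ω - X 0 ω) = (P 0).map (fun ω i => X (s i) ω - X 0 ω) := by
  have := hX.prob x
  have := hX.prob 0
  have hmeas : Measurable fun ω i => X (s i) ω - X 0 ω :=
    measurable_pi_lambda _ fun i => (hX.meas _).sub (hX.meas _)
  have hproj : ∀ z, IsProjectiveLimit ((P z).map fun ω i => X (s i) ω - X 0 ω)
      fun I : Finset ι => (P 0).map fun ω (j : I) => X (s j) ω - X 0 ω := fun z I => by
    rw [Measure.map_map (Finset.measurable_restrict I) hmeas]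
    exact hX.map_sub_start_of_fintype z fun j => hs j
  exact (hproj x).unique (hproj 0)

lemma IsLevyFamily.runSup_ae_eq (hX : IsLevyFamily P X p) (x : ℝ) {t : ℝ} (ht : 0 ≤ t) :
    runSup X t =ᵐ[P x] fun ω => x + ⨆ q : ℚ, (X (projIcc 0 t ht q) ω - X 0 ω) := by
  filter_upwards [hX.cadlag x, hX.ae_start x] with ω hω hω₀
  have hbdd := bddAbove_image_Icc_of_cadlag (t := t) hω.1 hω.2
  have hbdd' : BddAbove (range fun q : ℚ => X (projIcc 0 t ht q) ω - X 0 ω) := by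
    obtain ⟨M, hM⟩ := hbdd
    exact ⟨M - X 0 ω, forall_mem_range.2 fun q =>
      sub_le_sub_right (hM (mem_image_of_mem _ (projIcc 0 t ht q).2)) _⟩
  rw [← hω₀, add_ciSup hbdd']
  simp only [add_sub_cancel]
  exact sSup_image_Icc_eq_iSup_rat ht hω.1 hbdd

lemma IsLevyFamily.aemeasurable_runSup (hX : IsLevyFamily P X p) (x : ℝ) {t : ℝ}
    (ht : 0 ≤ t) : AEMeasurable (runSup X t) (P x) :=
  ⟨_, measurable_const.add (Measurable.iSup fun _ => (hX.meas _).sub (hX.meas _)),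
    hX.runSup_ae_eq x ht⟩

lemma IsLevyFamily.measure_runSup_mem_Ioc (hX : IsLevyFamily P X p) {t : ℝ} (ht : 0 ≤ t)
    (x a b : ℝ) :
    P x {ω | runSup X t ω ∈ Ioc a b} = (P 0).map (runSup X t) (Ioc (a - x) (b - x)) := by
  set V : Ω → ℚ → ℝ := fun ω q => X (projIcc 0 t ht q) ω - X 0 ω
  have hV : Measurable V := measurable_pi_lambda _ fun q => (hX.meas _).sub (hX.meas _)
  have hsup : Measurable fun w : ℚ → ℝ => ⨆ q, w q := Measurable.iSup measurable_pi_apply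
  set R : Ω → ℝ := fun ω => ⨆ q, V ω q
  have hR : Measurable R := hsup.comp hV
  have hlaw : (P x).map R = (P 0).map R := by
    have hVlaw : (P x).map V = (P 0).map V :=
      hX.map_sub_start x fun q => (projIcc 0 t ht q).2.1
    rw [show R = (fun w : ℚ → ℝ => ⨆ q, w q) ∘ V from rfl, ← Measure.map_map hsup hV,
      ← Measure.map_map hsup hV, hVlaw]
  calc P x {ω | runSup X t ω ∈ Ioc a b}
      = P x (R ⁻¹' Ioc (a - x) (b - x)) := by
        change P x (runSup X t ⁻¹' Ioc a b) = _
        rw [measure_congr ((hX.runSup_ae_eq x ht).preimage (Ioc a b)), ← preimage_const_add_Ioc]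
        rfl
    _ = (P 0).map (runSup X t) (Ioc (a - x) (b - x)) := by
        rw [← Measure.map_apply hR measurableSet_Ioc, hlaw,
          Measure.map_congr (hX.runSup_ae_eq 0 ht)]
        simp only [zero_add, R, V]

lemma ofReal_abs_sub_le_measure_runSup_mem_Ioc {α : Type*} [MeasurableSpace α]
    (μ : Measure α) [IsFiniteMeasure μ] (X : ℝ → α → ℝ) (δ : ℝ) {t : ℝ} (ht : 0 ≤ t) (y : ℝ) :
    ENNReal.ofReal |μ.real {ω | y < runSup X t ω} - μ.real {ω | y < runSup (drifted X δ) t ω}|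
      ≤ μ {ω | runSup X t ω ∈ Ioc (y - max (-δ) 0 * t) (y + max δ 0 * t)} := by
  have hplus : 0 ≤ max δ 0 * t := mul_nonneg (le_max_right _ _) ht
  have hminus : 0 ≤ max (-δ) 0 * t := mul_nonneg (le_max_right _ _) ht
  refine ofReal_abs_measureReal_sub_le μ (fun ω hω => ?_) (fun ω hω => ?_) <;>
  · obtain ⟨hlow, hhigh⟩ := runSup_drifted_mem_Icc X δ ht ω
    simp only [mem_union, mem_ofPred_eq, mem_Ioc] at hω ⊢
    by_cases hmid : y - max (-δ) 0 * t < runSup X t ω ∧ runSup X t ω ≤ y + max δ 0 * t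
    · exact Or.inr hmid
    · rw [not_and_or, not_lt, not_le] at hmid
      left
      rcases hmid with h | h <;> linarith

theorem statement_8_general
    {Ω : Type*} [MeasurableSpace Ω] (P : ℝ → Measure Ω) (X : ℝ → Ω → ℝ)
    (p : JumpParams) (δ : ℝ)
    (hX : IsLevyFamily P X p)
    (t : ℝ) (ht : 0 ≤ t) (y : ℝ) :
    ∫⁻ x : ℝ, ENNReal.ofReal
        |((P x) {ω | y < runSup X t ω}).toReal
          - ((P x) {ω | y < runSup (drifted X δ) t ω}).toReal|
      ≤ ENNReal.ofReal (|δ| * t) := by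
  have := hX.prob
  have := Measure.isProbabilityMeasure_map (hX.aemeasurable_runSup 0 ht)
  calc _ ≤ ∫⁻ x, P x {ω | runSup X t ω ∈ Ioc (y - max (-δ) 0 * t) (y + max δ 0 * t)} :=
        lintegral_mono fun x => ofReal_abs_sub_le_measure_runSup_mem_Ioc (P x) X δ ht y
    _ = ∫⁻ x, (P 0).map (runSup X t) (Ioc (y - max (-δ) 0 * t - x) (y + max δ 0 * t - x)) := by
        simp only [hX.measure_runSup_mem_Ioc ht]
    _ = ENNReal.ofReal (|δ| * t) := by
        rw [lintegral_measure_Ioc_sub_sub, measure_univ, mul_one,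
          ← max_zero_add_max_neg_zero_eq_abs_self δ]
        ring_nf

/-- Lemma 3.1, (3.11): for every `t ≥ 0` and `y ∈ ℝ`,
`∫ |P_x(X̄_t > y) − P̂_x(Ȳ_t > y)| dx ≤ |δ| t`. -/
theorem statement_8
    {Ω : Type*} [MeasurableSpace Ω] (P : ℝ → Measure Ω) (X : ℝ → Ω → ℝ)
    (p : JumpParams) (δ : ℝ)
    (hX : IsLevyFamily P X p) (hp : p.IsDensity)
    (t : ℝ) (ht : 0 ≤ t) (y : ℝ) :
    ∫⁻ x : ℝ, ENNReal.ofReal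
        |((P x) {ω | y < runSup X t ω}).toReal
          - ((P x) {ω | y < runSup (drifted X δ) t ω}).toReal|
      ≤ ENNReal.ofReal (|δ| * t) :=
  statement_8_general P X p δ hX t ht y

end RefractedLevy
end
end

section
/- Let M,N≥1, let β̂_1,…,β̂_M be distinct nonzero complex numbers, let γ̂_1,…,γ̂_N be distinct nonzero complex numbers with β̂_i+γ̂_j≠0 for all i,j, and let Ĉ_1,…,Ĉ_M and D̂_1,…,D̂_N be complex numbers with Σ_{i=1}^M Ĉ_i/β̂_i = 1 and Σ_{j=1}^N D̂_j/γ̂_j = 1. Define Ĥ_k := (Ĉ_k/β̂_k) Σ_{j=1}^N D̂_j/(β̂_k+γ̂_j) for 1≤k≤M, and Q̂_k := D̂_k Σ_{i=1}^M Ĉ_i/(β̂_i(β̂_i+γ̂_k)) − D̂_k/γ̂_k for 1≤k≤N. Then for every θ∈ℂ not equal to any β̂_i nor to any −γ̂_j: Σ_{k=1}^M θĤ_k/(β̂_k−θ) + Σ_{k=1}^N θQ̂_k/(θ+γ̂_k) + 1 = ( Σ_{i=1}^M Ĉ_i/(β̂_i−θ) ) · ( Σ_{j=1}^N D̂_j/(θ+γ̂_j)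 ). -/
/-!
Every term on the left is a simple fraction in `θ`, and the identity is a partial-fraction
expansion of the product on the right. For a single pair of poles `β, -γ`,
`θ / (β (β + γ)) · (1/(β - θ) + 1/(θ + γ)) = (1/(β - θ) - 1/β) / (θ + γ)`;
summing over all pairs produces the product minus `(Σ Ĉ_i/β̂_i) · Σ D̂_j/(θ + γ̂_j)`, which by
the first normalisation is `Σ D̂_j/(θ + γ̂_j)`. The terms `-D̂_k/γ̂_k` in `Q̂_k` contribute
`Σ D̂_j/(θ + γ̂_j) - Σ D̂_j/γ̂_j`, and the second normalisation turns the latter sum into the `1`.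
-/

open Finset

section PartialFractions

variable {K : Type*} [Field K]

theorem pole_pair_partial_fraction {β γ θ : K} (hβ : β ≠ 0) (hβγ : β + γ ≠ 0)
    (hβθ : β - θ ≠ 0) (hθγ : θ + γ ≠ 0) (c d : K) :
    θ * (c / β * (d / (β + γ))) / (β - θ) + θ * (d * (c / (β * (β + γ)))) / (θ + γ)
      = c / (β - θ) * (d / (θ + γ)) - c / β * (d / (θ + γ)) := by
  field_simp
  ring

theorem mul_div_div_add_eq_div_sub_div {γ θ : K} (hγ : γ ≠ 0) (hθγ : θ + γ ≠ 0) (d : K) :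
    θ * (d / γ) / (θ + γ) = d / γ - d / (θ + γ) := by
  field_simp
  ring

variable {ι κ : Type*} [Fintype ι] [Fintype κ]

theorem sum_pole_pairs_partial_fraction (β : ι → K) (γ : κ → K) (C : ι → K) (D : κ → K)
    (θ : K) (hβ : ∀ i, β i ≠ 0) (hβγ : ∀ i j, β i + γ j ≠ 0)
    (hβθ : ∀ i, β i - θ ≠ 0) (hθγ : ∀ j, θ + γ j ≠ 0) :
    ∑ i, θ * (C i / β i * ∑ j, D j / (β i + γ j)) / (β i - θ)
        + ∑ j, θ * (D j * ∑ i, C i / (β i * (β i + γ j))) / (θ + γ j)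
      = (∑ i, C i / (β i - θ)) * (∑ j, D j / (θ + γ j))
        - (∑ i, C i / β i) * (∑ j, D j / (θ + γ j)) := by
  rw [sum_mul_sum, sum_mul_sum, ← sum_sub_distrib]
  simp only [mul_sum, sum_div]
  rw [sum_comm (s := univ (α := κ)), ← sum_add_distrib]
  refine sum_congr rfl fun i _ => ?_
  rw [← sum_add_distrib, ← sum_sub_distrib]
  exact sum_congr rfl fun j _ =>
    pole_pair_partial_fraction (hβ i) (hβγ i j) (hβθ i) (hθγ j) (C i) (D j)

end PartialFractions

theorem statement_16_general
    (M N : ℕ)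
    (βh : Fin M → ℂ) (γh : Fin N → ℂ)
    (hβ0 : ∀ i, βh i ≠ 0) (hγ0 : ∀ j, γh j ≠ 0)
    (hsum : ∀ i j, βh i + γh j ≠ 0)
    (C : Fin M → ℂ) (D : Fin N → ℂ)
    (hC : ∑ i, C i / βh i = 1) (hD : ∑ j, D j / γh j = 1)
    (H : Fin M → ℂ) (Q : Fin N → ℂ)
    (hH : ∀ k, H k = C k / βh k * ∑ j, D j / (βh k + γh j))
    (hQ : ∀ k, Q k = D k * (∑ i, C i / (βh i * (βh i + γh k))) - D k / γh k)
    (θ : ℂ) (hθ1 : ∀ i, θ ≠ βh i) (hθ2 : ∀ j, θ ≠ -γh j) :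
    (∑ k, θ * H k / (βh k - θ)) + (∑ k, θ * Q k / (θ + γh k)) + 1
      = (∑ i, C i / (βh i - θ)) * ∑ j, D j / (θ + γh j) := by
  have hβθ : ∀ i, βh i - θ ≠ 0 := fun i => sub_ne_zero.mpr (hθ1 i).symm
  have hθγ : ∀ j, θ + γh j ≠ 0 := fun j h => hθ2 j (eq_neg_of_add_eq_zero_left h)
  have hpairs := sum_pole_pairs_partial_fraction βh γh C D θ hβ0 hsum hβθ hθγ
  have hcorrection : ∑ k, θ * (D k / γh k) / (θ + γh k) = 1 - ∑ k, D k / (θ + γh k) := by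
    rw [← hD, ← sum_sub_distrib]
    exact sum_congr rfl fun k _ => mul_div_div_add_eq_div_sub_div (hγ0 k) (hθγ k) (D k)
  simp only [hH, hQ, mul_sub, sub_div, sum_sub_distrib]
  rw [hC] at hpairs
  linear_combination hpairs - hcorrection

/-- identity (A.29): with `Ĥ_k` and `Q̂_k` built from `Ĉ_i, D̂_j` as in
(A.17)–(A.18), one has
`Σ θĤ_k/(β̂_k−θ) + Σ θQ̂_k/(θ+γ̂_k) + 1 = (Σ Ĉ_i/(β̂_i−θ))·(Σ D̂_j/(θ+γ̂_j))`. -/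
theorem statement_16
    (M N : ℕ) (hM : 1 ≤ M) (hN : 1 ≤ N)
    (βh : Fin M → ℂ) (γh : Fin N → ℂ)
    (hβ0 : ∀ i, βh i ≠ 0) (hγ0 : ∀ j, γh j ≠ 0)
    (hβinj : Function.Injective βh) (hγinj : Function.Injective γh)
    (hsum : ∀ i j, βh i + γh j ≠ 0)
    (C : Fin M → ℂ) (D : Fin N → ℂ)
    (hC : ∑ i, C i / βh i = 1) (hD : ∑ j, D j / γh j = 1)
    (H : Fin M → ℂ) (Q : Fin N → ℂ)
    (hH : ∀ k, H k = C k / βh k * ∑ j, D j / (βh k + γh j))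
    (hQ : ∀ k, Q k = D k * (∑ i, C i / (βh i * (βh i + γh k))) - D k / γh k)
    (θ : ℂ) (hθ1 : ∀ i, θ ≠ βh i) (hθ2 : ∀ j, θ ≠ -γh j) :
    (∑ k, θ * H k / (βh k - θ)) + (∑ k, θ * Q k / (θ + γh k)) + 1
      = (∑ i, C i / (βh i - θ)) * ∑ j, D j / (θ + γh j) :=
  statement_16_general M N βh γh hβ0 hγ0 hsum C D hC hD H Q hH hQ θ hθ1 hθ2
end

section
/- Let M≥1, let β̂_1,…,β̂_M be distinct complex numbers with positive real parts, and let β_1,…,β_M be nonzero complex numbers. Define F₀(x) := Σ_{i=1}^M e^{−β̂_i x} · Π_{k=1}^M ((β̂_i−β_k)/β_k) · Π_{k≠i} (β̂_k/(β̂_i−β̂_k)) for x>0. Then for every s∈ℂ with Re(s)>0: ∫₀^∞ e^{−sx} F₀(x) dx = (1/s) ( Π_{k=1}^M ((s+β_k)/β_k) · Π_{k=1}^M (β̂_k/(s+β̂_k)) − 1 ). -/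
/-!
Each exponential has Laplace transform `∫₀^∞ e^{-(s+β̂ᵢ)x} dx = 1/(s+β̂ᵢ)`, so the claim is a
partial fraction expansion. Over the common denominator `s · Πβₖ · Π(s+β̂ₖ)` the right-hand side
has numerator `N(s) = Πβ̂ₖ · Π(s+βₖ) - Πβₖ · Π(s+β̂ₖ)`, a polynomial of degree `≤ M` vanishing at
`0`. Lagrange interpolation of `N(X)/X` (degree `< M`) at the nodes `-β̂ᵢ` expands
`N(s)/(s Π(s+β̂ₖ))` into simple fractions; the interpolation weights times `N(-β̂ᵢ)/(-β̂ᵢ)` are,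
up to the factor `Πβₖ`, the coefficients of the exponentials in `F₀`.
-/

open Polynomial Finset Lagrange

namespace Lagrange

variable {F ι : Type*} [Field F] [DecidableEq ι] {s : Finset ι} {v : ι → F} {f : F[X]} {x : F}

theorem eval_div_eval_nodal (hvs : Set.InjOn v s) (hf : f.degree < #s)
    (hx : ∀ i ∈ s, x ≠ v i) :
    f.eval x / (nodal s v).eval x = ∑ i ∈ s, nodalWeight s v i * f.eval (v i) / (x - v i) := by
  conv_lhs => rw [eq_interpolate hvs hf]
  rw [eval_interpolate_not_at_node _ hx, mul_div_cancel_left₀ _ (eval_nodal_not_at_node hx)]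
  exact sum_congr rfl fun i _ => by ring

end Lagrange

section PartialFractions

variable {K ι : Type*} [Field K] [Fintype ι] (β βh : ι → K)

noncomputable def crossNumerator : K[X] :=
  (∏ k, βh k) • nodal univ (-β) - (∏ k, β k) • nodal univ (-βh)

theorem degree_crossNumerator_le : (crossNumerator β βh).degree ≤ Fintype.card ι := by
  refine (degree_sub_le _ _).trans (max_le ?_ ?_) <;>
    exact (degree_smul_le _ _).trans (by rw [degree_nodal, card_univ])

theorem eval_crossNumerator (z : K) :
    (crossNumerator β βh).eval z
      = (∏ k, βh k) * ∏ k, (z + β k) - (∏ k, β k) * ∏ k, (z + βh k) := by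
  simp [crossNumerator, eval_nodal]

theorem X_dvd_crossNumerator : X ∣ crossNumerator β βh := by
  rw [X_dvd_iff, coeff_zero_eq_eval_zero, eval_crossNumerator]
  simp only [zero_add]
  ring

theorem eval_neg_crossNumerator (i : ι) :
    (crossNumerator β βh).eval (-βh i) = (∏ k, βh k) * ∏ k, (β k - βh i) := by
  have hvanish : ∏ k, (-βh i + βh k) = 0 := prod_eq_zero (mem_univ i) (neg_add_cancel _)
  rw [eval_crossNumerator, hvanish, mul_zero, sub_zero]
  simp only [neg_add_eq_sub]

theorem nodalWeight_mul_eval_crossNumerator_div [DecidableEq ι] {i : ι} (hi : βh i ≠ 0) :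
    nodalWeight univ (-βh) i * ((crossNumerator β βh).eval (-βh i) / -βh i)
      = (∏ k, (βh i - β k)) * ∏ k ∈ univ.erase i, βh k / (βh i - βh k) := by
  -- `E = (-1) ^ (card ι - 1)`: the signs from the numerator, the weight and `-βh i` cancel.
  set E := ∏ k ∈ univ.erase i, (-1 : K)
  have hE : E * E = 1 := by rw [← prod_mul_distrib]; simp
  have hnum : ∏ k, (β k - βh i) = -E * ∏ k, (βh i - β k) := by
    rw [show -E = ∏ k, (-1 : K) by rw [← mul_prod_erase _ _ (mem_univ i)]; ring,
      ← prod_mul_distrib]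
    exact prod_congr rfl fun k _ => by ring
  have hden :
      ∏ k ∈ univ.erase i, (-βh i - -βh k) = E * ∏ k ∈ univ.erase i, (βh i - βh k) := by
    rw [← prod_mul_distrib]
    exact prod_congr rfl fun k _ => by ring
  rw [eval_neg_crossNumerator, nodalWeight, ← mul_prod_erase univ βh (mem_univ i), hnum]
  simp only [Pi.neg_apply, div_eq_mul_inv, prod_mul_distrib, prod_inv_distrib, hden, mul_inv]
  rw [inv_eq_of_mul_eq_one_right hE]
  field_simp
  rw [sq, hE, one_mul]

theorem sum_div_add_eq_eval_crossNumerator_div [DecidableEq ι] (hinj : Function.Injective βh)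
    (hβh : ∀ i, βh i ≠ 0) {z : K} (hz : z ≠ 0) (hzβh : ∀ i, z + βh i ≠ 0) :
    ∑ i, (∏ k, (βh i - β k)) * (∏ k ∈ univ.erase i, βh k / (βh i - βh k)) / (z + βh i)
      = (crossNumerator β βh).eval z / (z * ∏ k, (z + βh k)) := by
  obtain ⟨q, hq⟩ := X_dvd_crossNumerator β βh
  have hq_eval : ∀ y : K, y ≠ 0 → q.eval y = (crossNumerator β βh).eval y / y :=
    fun y hy => by
      rw [hq, eval_mul, eval_X, mul_div_cancel_left₀ _ hy]
  have hq_deg : q.degree < #(univ : Finset ι) := by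
    rcases eq_or_ne q 0 with rfl | hq0
    · simp
    · have h := degree_crossNumerator_le β βh
      rw [hq, mul_comm] at h
      rw [card_univ]
      exact (degree_lt_degree_mul_X hq0).trans_le h
  have hnodes : ∀ i ∈ univ, z ≠ (-βh) i := fun i _ h => hzβh i (by simp [h])
  have hinj' : Function.Injective (-βh) := neg_injective.comp hinj
  have hpf := eval_div_eval_nodal hinj'.injOn hq_deg hnodes
  simp only [eval_nodal, Pi.neg_apply, sub_neg_eq_add, hq_eval, ne_eq, neg_eq_zero, hz, hβh,
    not_false_eq_true, nodalWeight_mul_eval_crossNumerator_div] at hpf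
  rw [← hpf, div_div]

theorem sum_div_add_eq_one_div_mul_prod_div_sub_one [DecidableEq ι]
    (hinj : Function.Injective βh) (hβh : ∀ i, βh i ≠ 0) (hβ : ∀ i, β i ≠ 0) {z : K}
    (hz : z ≠ 0) (hzβh : ∀ i, z + βh i ≠ 0) :
    ∑ i, (∏ k, (βh i - β k) / β k) * (∏ k ∈ univ.erase i, βh k / (βh i - βh k)) / (z + βh i)
      = 1 / z * ((∏ k, (z + β k) / β k) * (∏ k, βh k / (z + βh k)) - 1) := by
  have hB : ∏ k, β k ≠ 0 := prod_ne_zero_iff.2 fun k _ => hβ k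
  have hT : ∏ k, (z + βh k) ≠ 0 := prod_ne_zero_iff.2 fun k _ => hzβh k
  calc _ = (∑ i, (∏ k, (βh i - β k)) * (∏ k ∈ univ.erase i, βh k / (βh i - βh k))
            / (z + βh i)) / ∏ k, β k := by
        rw [sum_div]
        exact sum_congr rfl fun i _ => by rw [prod_div_distrib]; ring
    _ = (crossNumerator β βh).eval z / (z * ∏ k, (z + βh k)) / ∏ k, β k := by
        rw [sum_div_add_eq_eval_crossNumerator_div β βh hinj hβh hz hzβh]
    _ = _ := by
        rw [eval_crossNumerator, prod_div_distrib, prod_div_distrib]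
        field_simp

end PartialFractions

open MeasureTheory Set

theorem integral_exp_neg_mul_Ioi_zero {a : ℂ} (ha : 0 < a.re) :
    ∫ x : ℝ in Ioi 0, Complex.exp (-a * x) = 1 / a := by
  rw [integral_exp_mul_complex_Ioi (by simpa using ha)]
  simp [neg_div]

theorem integral_exp_neg_mul_mul_sum_exp {ι : Type*} (t : Finset ι) (a c : ι → ℂ) {s : ℂ}
    (h : ∀ i ∈ t, 0 < (s + a i).re) :
    ∫ x in Ioi (0 : ℝ), Complex.exp (-s * x) * ∑ i ∈ t, Complex.exp (-a i * x) * c i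
      = ∑ i ∈ t, c i / (s + a i) := by
  have hsplit : ∀ x : ℝ, Complex.exp (-s * x) * ∑ i ∈ t, Complex.exp (-a i * x) * c i
      = ∑ i ∈ t, c i * Complex.exp (-(s + a i) * x) := fun x => by
    rw [mul_sum]
    refine sum_congr rfl fun i _ => ?_
    rw [neg_add, add_mul, Complex.exp_add]
    ring
  simp_rw [hsplit]
  have hint : ∀ i ∈ t, IntegrableOn (fun x : ℝ => Complex.exp (-(s + a i) * x)) (Ioi 0) :=
    fun i hi => integrableOn_exp_mul_complex_Ioi (by simpa using neg_neg_of_pos (h i hi)) 0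
  rw [integral_finsetSum _ fun i hi => (hint i hi).const_mul _]
  refine sum_congr rfl fun i hi => ?_
  rw [integral_const_mul, integral_exp_neg_mul_Ioi_zero (h i hi), mul_one_div]

theorem statement_17_general
    (M : ℕ) (βh β : Fin M → ℂ)
    (hβh_inj : Function.Injective βh) (hβh_re : ∀ i, 0 < (βh i).re)
    (hβ0 : ∀ i, β i ≠ 0)
    (s : ℂ) (hs : 0 < s.re) :
    ∫ x in Ioi (0:ℝ), Complex.exp (-s * (x : ℂ)) *
        ∑ i, Complex.exp (-(βh i) * (x : ℂ)) * (∏ k, (βh i - β k) / β k) *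
          ∏ k ∈ Finset.univ.erase i, βh k / (βh i - βh k)
      = (1 / s) * ((∏ k, (s + β k) / β k) * (∏ k, βh k / (s + βh k)) - 1) := by
  have hre : ∀ i, 0 < (s + βh i).re := fun i => by simpa using add_pos hs (hβh_re i)
  simp_rw [mul_assoc]
  rw [integral_exp_neg_mul_mul_sum_exp univ βh _ fun i _ => hre i]
  exact sum_div_add_eq_one_div_mul_prod_div_sub_one β βh hβh_inj
    (fun i => Complex.ne_zero_of_re_pos (hβh_re i)) hβ0 (Complex.ne_zero_of_re_pos hs)
    fun i => Complex.ne_zero_of_re_pos (hre i)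

/-- identity (3.7): the Laplace transform of
`F₀(x) = Σ_i e^{−β̂_i x} Π_k((β̂_i−β_k)/β_k) Π_{k≠i}(β̂_k/(β̂_i−β̂_k))` is
`(1/s)(Π((s+β_k)/β_k)·Π(β̂_k/(s+β̂_k)) − 1)` for `Re s > 0`. -/
theorem statement_17
    (M : ℕ) (hM : 1 ≤ M) (βh β : Fin M → ℂ)
    (hβh_inj : Function.Injective βh) (hβh_re : ∀ i, 0 < (βh i).re)
    (hβ0 : ∀ i, β i ≠ 0)
    (s : ℂ) (hs : 0 < s.re) :
    ∫ x in Ioi (0:ℝ), Complex.exp (-s * (x : ℂ)) *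
        ∑ i, Complex.exp (-(βh i) * (x : ℂ)) * (∏ k, (βh i - β k) / β k) *
          ∏ k ∈ Finset.univ.erase i, βh k / (βh i - βh k)
      = (1 / s) * ((∏ k, (s + β k) / β k) * (∏ k, βh k / (s + βh k)) - 1) :=
  statement_17_general M βh β hβh_inj hβh_re hβ0 s hs
end

section
/- Let M≥1, let β̂_1,…,β̂_M be distinct nonzero complex numbers, and let β_1,…,β_M be nonzero complex numbers. Then Σ_{i=1}^M Π_{k=1}^M ((β̂_i−β_k)/β_k) · Π_{k≠i} (β̂_k/(β̂_i−β̂_k)) = (Π_{k=1}^M β̂_k)/(Π_{k=1}^M β_k) − 1. -/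
/-!
Put `P = ∏ₖ (X - βₖ)` and `R = ∏ₖ (X - β̂ₖ)`. Both are monic of degree `M`, so `P - R` has degree
`< M` and equals its Lagrange interpolant at the nodes `β̂ᵢ`, where it takes the values `P(β̂ᵢ)`.
Evaluating this identity at `0` gives the claim: `P(0) - R(0) = (-1)^M (∏ βₖ - ∏ β̂ₖ)`, while
the value of the `i`-th Lagrange basis polynomial at `0` is `∏_{k ≠ i} β̂ₖ / (β̂ₖ - β̂ᵢ)`.
-/

open Polynomial Finset

namespace Lagrange

variable {F ι : Type*} [Field F] {s : Finset ι} {v : ι → F}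

theorem eval_zero_nodal :
    (nodal s v).eval 0 = (-1) ^ #s * ∏ i ∈ s, v i := by
  rw [eval_nodal, ← prod_neg]
  simp only [zero_sub]

variable [DecidableEq ι]

theorem sub_nodal_eq_sum_eval_mul_basis {P : F[X]} (hvs : Set.InjOn v s) (hP : P.Monic)
    (hPdeg : P.degree = #s) :
    P - nodal s v = ∑ i ∈ s, C (P.eval (v i)) * Lagrange.basis s v i := by
  have hdeg : (P - nodal s v).degree < #s := by
    have := degree_sub_lt_left (hPdeg.trans (degree_nodal (s := s) (v := v)).symm) hP.ne_zero
      (by rw [hP.leadingCoeff, nodal_monic.leadingCoeff])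
    rwa [hPdeg] at this
  rw [eq_interpolate hvs hdeg, interpolate_apply]
  refine sum_congr rfl fun i hi => ?_
  rw [eval_sub, eval_nodal_at_node hi, sub_zero]

theorem neg_one_pow_card_mul_eval_zero_basis {i : ι} (hi : i ∈ s) :
    (-1) ^ #s * (Lagrange.basis s v i).eval 0 = -∏ j ∈ s.erase i, v j / (v i - v j) := by
  have hdivisor : ∀ j, (basisDivisor (v i) (v j)).eval 0 = -(v j / (v i - v j)) := fun j => by
    simp only [basisDivisor, eval_mul, eval_C, eval_sub, eval_X, zero_sub, mul_neg,
      div_eq_inv_mul]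
  have hsign : ((-1 : F) ^ #(s.erase i)) * (-1) ^ #(s.erase i) = 1 := by
    rw [← mul_pow]; norm_num
  rw [Lagrange.basis, eval_prod, prod_congr rfl fun j _ => hdivisor j, prod_neg,
    ← card_erase_add_one hi, pow_succ]
  linear_combination (-∏ j ∈ s.erase i, v j / (v i - v j)) * hsign

end Lagrange

theorem sum_prod_sub_mul_prod_div_sub {F ι : Type*} [Field F] [DecidableEq ι] {s : Finset ι}
    {v : ι → F} (hvs : Set.InjOn v s) (β : ι → F) :
    ∑ i ∈ s, (∏ k ∈ s, (v i - β k)) * ∏ j ∈ s.erase i, v j / (v i - v j)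
      = ∏ k ∈ s, v k - ∏ k ∈ s, β k := by
  have hinterp := congrArg (eval 0)
    (Lagrange.sub_nodal_eq_sum_eval_mul_basis hvs (Lagrange.nodal_monic (s := s) (v := β))
      Lagrange.degree_nodal)
  rw [eval_sub, Lagrange.eval_zero_nodal, Lagrange.eval_zero_nodal, eval_finsetSum] at hinterp
  simp only [eval_mul, eval_C, Lagrange.eval_nodal] at hinterp
  have hsign : ((-1 : F) ^ #s) * (-1) ^ #s = 1 := by
    rw [← mul_pow]; norm_num
  calc ∑ i ∈ s, (∏ k ∈ s, (v i - β k)) * ∏ j ∈ s.erase i, v j / (v i - v j)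
      = -∑ i ∈ s, (∏ k ∈ s, (v i - β k)) * ((-1) ^ #s * (Lagrange.basis s v i).eval 0) := by
        rw [← sum_neg_distrib]
        refine sum_congr rfl fun i hi => ?_
        rw [Lagrange.neg_one_pow_card_mul_eval_zero_basis hi, mul_neg, neg_neg]
    _ = -((-1) ^ #s * ((-1) ^ #s * ∏ k ∈ s, β k - (-1) ^ #s * ∏ k ∈ s, v k)) := by
        rw [hinterp, mul_sum]
        exact congrArg _ (sum_congr rfl fun i _ => by ring)
    _ = ∏ k ∈ s, v k - ∏ k ∈ s, β k := by
        linear_combination (∏ k ∈ s, v k - ∏ k ∈ s, β k) * hsign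

theorem statement_18_general
    (M : ℕ) (βh β : Fin M → ℂ)
    (hβh_inj : Function.Injective βh)
    (hβ0 : ∀ i, β i ≠ 0) :
    ∑ i, (∏ k, (βh i - β k) / β k) * ∏ k ∈ Finset.univ.erase i, βh k / (βh i - βh k)
      = (∏ k, βh k) / (∏ k, β k) - 1 := by
  have hβprod : ∏ k, β k ≠ 0 := prod_ne_zero_iff.mpr fun k _ => hβ0 k
  calc ∑ i, (∏ k, (βh i - β k) / β k) * ∏ k ∈ univ.erase i, βh k / (βh i - βh k)
      = (∑ i, (∏ k, (βh i - β k)) * ∏ k ∈ univ.erase i, βh k / (βh i - βh k)) / ∏ k, β k := by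
        simp only [prod_div_distrib, div_mul_eq_mul_div, sum_div]
    _ = (∏ k, βh k) / (∏ k, β k) - 1 := by
        rw [sum_prod_sub_mul_prod_div_sub hβh_inj.injOn, sub_div, div_self hβprod]

/-- the value `F₀(0+)`, cf. (2.12):
`Σ_i Π_k((β̂_i−β_k)/β_k) Π_{k≠i}(β̂_k/(β̂_i−β̂_k)) = (Π β̂_k)/(Π β_k) − 1`. -/
theorem statement_18
    (M : ℕ) (hM : 1 ≤ M) (βh β : Fin M → ℂ)
    (hβh0 : ∀ i, βh i ≠ 0) (hβh_inj : Function.Injective βh)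
    (hβ0 : ∀ i, β i ≠ 0) :
    ∑ i, (∏ k, (βh i - β k) / β k) * ∏ k ∈ Finset.univ.erase i, βh k / (βh i - βh k)
      = (∏ k, βh k) / (∏ k, β k) - 1 :=
  statement_18_general M βh β hβh_inj hβ0
end
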